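/- arXiv:1909.01094 — 2 statements merged into one kernel-verified Lean document; each statement's English description precedes it below -/
import Mathlib

section
/- Let K be a field and V = ⊕_{n∈ℤ} K, with β : V → V the two-sided Bernoulli shift (x_n)_{n∈ℤ} ↦ (x_{n−1})_{n∈ℤ}. If a K-subspace U of V is linearly β-inert and linearly β⁻¹-inert (i.e., (U + βU)/U and (U + β⁻¹U)/U are finite-dimensional), then U is almost equal to one of: 0, V⁻ = ⊕_{n≤0} K, V⁺ = ⊕_{n≥0} K, or V. -/
/-- The two-sided Bernoulli shift on `V = ⊕_{n∈ℤ} K`, `(x_n)_{n∈ℤ} ↦ (x_{n-1})_{n∈ℤ}`. -/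
noncomputable def bernoulliShift (K : Type*) [Field K] : (ℤ →₀ K) ≃ₗ[K] (ℤ →₀ K) :=
  Finsupp.domLCongr (Equiv.addRight (1 : ℤ))

/-- Two subspaces `U`, `W` are almost equal if `U/(U∩W)` and `W/(U∩W)` are
finite-dimensional. -/
def AlmostEqual {K V : Type*} [Field K] [AddCommGroup V] [Module K V]
    (U W : Submodule K V) : Prop :=
  FiniteDimensional K (U ⧸ (U ⊓ W).comap U.subtype) ∧
    FiniteDimensional K (W ⧸ (U ⊓ W).comap W.subtype)

/-- A subspace `U` is linearly `φ`-inert if `(U + φU)/U` is finite-dimensional. -/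
def LinearlyInert {K V : Type*} [Field K] [AddCommGroup V] [Module K V]
    (φ : V →ₗ[K] V) (U : Submodule K V) : Prop :=
  FiniteDimensional K ((↥(U ⊔ U.map φ)) ⧸ U.comap (U ⊔ U.map φ).subtype)

/-!
Let `F` be finite-dimensional with `βU ⊆ U + F`, and let `F` be supported in `[a, b]`. If some
`u ∈ U` has a nonzero coefficient beyond `b`, then shifting `u` and correcting by `F` again and
again produces vectors of `U` with top coefficient at every position `≥ m` and support bounded
below, so by elimination from the top `U` contains `⊕_{n ≥ c} K` up to a finite-dimensional
subspace. Otherwise `U` is bounded above. Conjugating by the reflection `n ↦ -n`, which swaps `β`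
and `β⁻¹`, gives the mirror dichotomy, and the four combinations of the two dichotomies are the
four cases of the theorem.
-/

open Set Finsupp

section AlmostLE

variable {K V : Type*} [Field K] [AddCommGroup V] [Module K V]

def AlmostLE (U W : Submodule K V) : Prop :=
  ∃ F : Submodule K V, FiniteDimensional K F ∧ U ≤ W ⊔ F

namespace AlmostLE

variable {U W X : Submodule K V}

theorem of_le (h : U ≤ W) : AlmostLE U W :=
  ⟨⊥, inferInstance, h.trans le_sup_left⟩

theorem of_finiteDimensional [FiniteDimensional K U] (W : Submodule K V) : AlmostLE U W :=
  ⟨U, inferInstance, le_sup_right⟩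

theorem trans (h₁ : AlmostLE U W) (h₂ : AlmostLE W X) : AlmostLE U X := by
  obtain ⟨F, hF, hUF⟩ := h₁
  obtain ⟨G, hG, hWG⟩ := h₂
  refine ⟨G ⊔ F, inferInstance, hUF.trans ?_⟩
  rw [← sup_assoc]
  exact sup_le_sup_right hWG F

theorem sup_left (h₁ : AlmostLE U X) (h₂ : AlmostLE W X) : AlmostLE (U ⊔ W) X := by
  obtain ⟨F, hF, hUF⟩ := h₁
  obtain ⟨G, hG, hWG⟩ := h₂
  exact ⟨F ⊔ G, inferInstance, sup_le (hUF.trans (sup_le_sup_left le_sup_left X))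
    (hWG.trans (sup_le_sup_left le_sup_right X))⟩

theorem map {V' : Type*} [AddCommGroup V'] [Module K V'] (f : V →ₗ[K] V')
    (h : AlmostLE U W) : AlmostLE (U.map f) (W.map f) := by
  obtain ⟨F, hF, hUF⟩ := h
  exact ⟨F.map f, inferInstance, (Submodule.map_mono hUF).trans (Submodule.map_sup W F f).le⟩

end AlmostLE

theorem almostLE_iff_finiteDimensional_quotient {A B : Submodule K V} :
    AlmostLE B A ↔ FiniteDimensional K (B ⧸ A.comap B.subtype) := by
  constructor
  · rintro ⟨F, hF, hBF⟩
    let f : B →ₗ[K] V ⧸ A := A.mkQ ∘ₗ B.subtype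
    have hker : LinearMap.ker f = A.comap B.subtype := by
      simp only [f, LinearMap.ker_comp, Submodule.ker_mkQ]
    have hrange : LinearMap.range f ≤ F.map A.mkQ := by
      rw [LinearMap.range_comp, Submodule.range_subtype]
      refine (Submodule.map_mono hBF).trans ?_
      rw [Submodule.map_sup, Submodule.mkQ_map_self, bot_sup_eq]
    have : FiniteDimensional K (LinearMap.range f) := Submodule.finiteDimensional_of_le hrange
    rw [← hker]
    exact f.quotKerEquivRange.symm.finiteDimensional
  · intro hfin
    obtain ⟨C, hC⟩ := Submodule.exists_isCompl (A.comap B.subtype)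
    have : FiniteDimensional K C := (Submodule.quotientEquivOfIsCompl _ C hC).finiteDimensional
    refine ⟨C.map B.subtype, inferInstance, fun b hb => ?_⟩
    obtain ⟨x, hx, y, hy, hxy⟩ :=
      Submodule.mem_sup.mp (hC.sup_eq_top ▸ Submodule.mem_top (x := (⟨b, hb⟩ : B)))
    exact Submodule.mem_sup.mpr
      ⟨x, hx, y, Submodule.mem_map_of_mem hy, congrArg Subtype.val hxy⟩

theorem almostEqual_iff {U W : Submodule K V} :
    AlmostEqual U W ↔ AlmostLE U W ∧ AlmostLE W U := by
  rw [AlmostEqual, almostLE_iff_finiteDimensional_quotient,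
    almostLE_iff_finiteDimensional_quotient,
    Submodule.comap_inf, Submodule.comap_inf, Submodule.comap_subtype_self,
    Submodule.comap_subtype_self, top_inf_eq, inf_top_eq]

theorem LinearlyInert.almostLE_map {φ : V →ₗ[K] V} {U : Submodule K V}
    (h : LinearlyInert φ U) : AlmostLE (U.map φ) U :=
  (AlmostLE.of_le le_sup_right).trans (almostLE_iff_finiteDimensional_quotient.mpr h)

end AlmostLE

section Supported

variable {K : Type*} [Field K]

instance finiteDimensional_supported_Icc (a b : ℤ) :
    FiniteDimensional K (supported K K (Icc a b)) :=
  (supportedEquivFinsupp (M := K) (R := K) (Icc a b)).symm.finiteDimensional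

theorem almostLE_supported_of_subset_union {s t : Set ℤ} {a b : ℤ} (h : s ⊆ t ∪ Icc a b) :
    AlmostLE (supported K K s) (supported K K t) :=
  ⟨supported K K (Icc a b), inferInstance, (supported_mono h).trans (supported_union t _).le⟩

theorem map_domLCongr_supported {α α' : Type*} (e : α ≃ α') (s : Set α) :
    (supported K K s).map (Finsupp.domLCongr e).toLinearMap = supported K K (e '' s) := by
  rw [← lmapDomain_supported]
  congr 1
  ext x
  simp [domLCongr_apply, equivMapDomain_eq_mapDomain]

theorem exists_le_supported_Icc (F : Submodule K (ℤ →₀ K)) [FiniteDimensional K F] :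
    ∃ a b : ℤ, F ≤ supported K K (Icc a b) := by
  obtain ⟨S, hS⟩ := Module.Finite.iff_fg.mp ‹FiniteDimensional K F›
  obtain ⟨a, ha⟩ := (S.biUnion Finsupp.support).bddBelow
  obtain ⟨b, hb⟩ := (S.biUnion Finsupp.support).bddAbove
  refine ⟨a, b, hS ▸ Submodule.span_le.mpr fun x hx k hk => ?_⟩
  have hk' : k ∈ S.biUnion Finsupp.support := Finset.mem_biUnion.mpr ⟨x, hx, hk⟩
  exact ⟨ha hk', hb hk'⟩

theorem exists_mem_supported_Icc_of_apply_ne_zero {x : ℤ →₀ K} {n : ℤ} (hn : x n ≠ 0) :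
    ∃ l m : ℤ, n ≤ m ∧ x ∈ supported K K (Icc l m) ∧ x m ≠ 0 := by
  have hne : x.support.Nonempty := ⟨n, mem_support_iff.mpr hn⟩
  refine ⟨x.support.min' hne, x.support.max' hne, x.support.le_max' n (mem_support_iff.mpr hn),
    fun k hk => ⟨x.support.min'_le k hk, x.support.le_max' k hk⟩,
    mem_support_iff.mp (x.support.max'_mem hne)⟩

theorem exists_mem_supported_Icc_of_mem_supported_Ici {x : ℤ →₀ K} {a : ℤ}
    (hx : x ∈ supported K K (Ici a)) : ∃ N : ℤ, x ∈ supported K K (Icc a N) := by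
  obtain ⟨N, hN⟩ := x.support.bddAbove
  exact ⟨N, fun k hk => ⟨hx hk, hN hk⟩⟩

theorem mem_supported_Icc_of_apply_eq_zero {x : ℤ →₀ K} {a N : ℤ}
    (hx : x ∈ supported K K (Icc a (N + 1))) (hN : x (N + 1) = 0) :
    x ∈ supported K K (Icc a N) := by
  intro k hk
  obtain ⟨hak, hkN⟩ := hx hk
  refine ⟨hak, ?_⟩
  rcases hkN.lt_or_eq with h | rfl
  · omega
  · exact absurd hN (mem_support_iff.mp hk)

end Supported

section Shift

variable {K : Type*} [Field K]

theorem bernoulliShift_apply (x : ℤ →₀ K) (n : ℤ) : bernoulliShift K x n = x (n - 1) := by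
  simp [bernoulliShift, domLCongr_apply, sub_eq_add_neg]

theorem bernoulliShift_mem_supported_Icc {x : ℤ →₀ K} {a b : ℤ}
    (hx : x ∈ supported K K (Icc a b)) :
    bernoulliShift K x ∈ supported K K (Icc (a + 1) (b + 1)) := by
  rw [← image_add_const_Icc, ← Equiv.coe_addRight, ← map_domLCongr_supported]
  exact Submodule.mem_map_of_mem hx

variable {U F : Submodule K (ℤ →₀ K)}

/- Write `β w = w' + f` with `w' ∈ U`, `f ∈ F`: since `f` vanishes above `b`, `w'` keeps the top
coefficient of `β w`, one place higher than that of `w`. -/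
theorem exists_mem_supported_Icc_apply_ne_zero_of_map_le {a b m : ℤ}
    (hUF : U.map (bernoulliShift K).toLinearMap ≤ U ⊔ F)
    (hF : F ≤ supported K K (Icc a b)) {u : ℤ →₀ K} (hu : u ∈ U)
    (hua : u ∈ supported K K (Icc a m)) (hum : u m ≠ 0) (hbm : b < m) (k : ℕ) :
    ∃ w ∈ U, w ∈ supported K K (Icc a (m + k)) ∧ w (m + k) ≠ 0 := by
  induction k with
  | zero => exact ⟨u, hu, by simpa using hua, by simpa using hum⟩
  | succ k ih =>
    obtain ⟨w, hw, hwa, hwm⟩ := ih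
    obtain ⟨w', hw', f, hf, hsum⟩ :=
      Submodule.mem_sup.mp (hUF (Submodule.mem_map_of_mem hw))
    have hw'_eq : w' = bernoulliShift K w - f := eq_sub_of_add_eq hsum
    have hfa : f ∈ supported K K (Icc a (m + ↑(k + 1))) :=
      supported_mono (Icc_subset_Icc_right (by omega)) (hF hf)
    have hβa : bernoulliShift K w ∈ supported K K (Icc a (m + ↑(k + 1))) :=
      supported_mono (Icc_subset_Icc (by omega) (by push_cast; omega))
        (bernoulliShift_mem_supported_Icc hwa)
    refine ⟨w', hw', hw'_eq ▸ Submodule.sub_mem _ hβa hfa, ?_⟩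
    have hf0 : f (m + ↑(k + 1)) = 0 :=
      notMem_support_iff.mp fun h => by have := (hF hf h).2; omega
    rw [hw'_eq, Finsupp.sub_apply, hf0, sub_zero, bernoulliShift_apply]
    convert hwm using 2
    push_cast
    ring

-- Gaussian elimination from the top coefficient down.
theorem supported_Ici_le_sup_supported_Icc {a m : ℤ}
    (hU : ∀ k : ℕ, ∃ w ∈ U, w ∈ supported K K (Icc a (m + k)) ∧ w (m + k) ≠ 0) :
    supported K K (Ici a) ≤ U ⊔ supported K K (Icc a m) := by
  have hIcc : ∀ k : ℕ, supported K K (Icc a (m + k)) ≤ U ⊔ supported K K (Icc a m) := by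
    intro k
    induction k with
    | zero => simp
    | succ k ih =>
      intro x hx
      obtain ⟨w, hw, hwa, hwm⟩ := hU (k + 1)
      rw [Nat.cast_succ, ← add_assoc] at hx hwa hwm
      set c := x (m + k + 1) / w (m + k + 1)
      have hx' : x - c • w ∈ supported K K (Icc a (m + k)) := by
        refine mem_supported_Icc_of_apply_eq_zero
          (Submodule.sub_mem _ hx (Submodule.smul_mem _ c hwa)) ?_
        simp [c, div_mul_cancel₀ _ hwm]
      simpa using
        Submodule.add_mem _ (ih hx') (Submodule.mem_sup_left (Submodule.smul_mem _ c hw))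
  intro x hx
  obtain ⟨N, hN⟩ := exists_mem_supported_Icc_of_mem_supported_Ici hx
  exact hIcc (N - m).toNat (supported_mono (Icc_subset_Icc_right (by omega)) hN)

end Shift

section Dichotomy

variable {K : Type*} [Field K] {U : Submodule K (ℤ →₀ K)}

theorem exists_le_supported_Iic_or_almostLE_supported_Ici
    (hU : AlmostLE (U.map (bernoulliShift K).toLinearMap) U) :
    (∃ b : ℤ, U ≤ supported K K (Iic b)) ∨ AlmostLE (supported K K (Ici 0)) U := by
  obtain ⟨F, hF, hUF⟩ := hU
  obtain ⟨a, b, hFab⟩ := exists_le_supported_Icc F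
  by_cases hb : U ≤ supported K K (Iic b)
  · exact Or.inl ⟨b, hb⟩
  right
  obtain ⟨u, hu, hub⟩ := SetLike.not_le_iff_exists.mp hb
  obtain ⟨n, hbn, hun⟩ : ∃ n, b < n ∧ u n ≠ 0 := by
    simpa [mem_supported', not_le] using hub
  obtain ⟨l, m, hnm, hulm, hum⟩ := exists_mem_supported_Icc_of_apply_ne_zero hun
  have hF' : F ≤ supported K K (Icc (min a l) b) :=
    hFab.trans (supported_mono (Icc_subset_Icc_left (min_le_left a l)))
  have hu' : u ∈ supported K K (Icc (min a l) m) :=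
    supported_mono (Icc_subset_Icc_left (min_le_right a l)) hulm
  have hIci := supported_Ici_le_sup_supported_Icc
    (exists_mem_supported_Icc_apply_ne_zero_of_map_le hUF hF' hu hu' hum (hbn.trans_le hnm))
  refine (almostLE_supported_of_subset_union (a := 0) (b := min a l) ?_).trans
    ⟨_, inferInstance, hIci⟩
  intro k hk
  simp only [mem_union, mem_Ici, mem_Icc] at hk ⊢
  omega

end Dichotomy

section Reflection

variable {K : Type*} [Field K]

variable (K) in
noncomputable def indexReflection : (ℤ →₀ K) ≃ₗ[K] (ℤ →₀ K) :=
  Finsupp.domLCongr (Equiv.neg ℤ)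

theorem indexReflection_comp_bernoulliShift_symm :
    (indexReflection K).toLinearMap ∘ₗ (bernoulliShift K).symm.toLinearMap =
      (bernoulliShift K).toLinearMap ∘ₗ (indexReflection K).toLinearMap := by
  ext x n
  simp [indexReflection, bernoulliShift, domLCongr_apply, add_comm]

theorem map_indexReflection_map_indexReflection (U : Submodule K (ℤ →₀ K)) :
    (U.map (indexReflection K).toLinearMap).map (indexReflection K).toLinearMap = U := by
  rw [← Submodule.map_comp]
  convert Submodule.map_id U
  ext x n
  simp [indexReflection, domLCongr_apply]

theorem map_indexReflection_supported (s : Set ℤ) :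
    (supported K K s).map (indexReflection K).toLinearMap = supported K K (-s) := by
  rw [indexReflection, map_domLCongr_supported, Equiv.neg_apply, Set.image_neg_eq_neg]

theorem exists_le_supported_Ici_or_almostLE_supported_Iic {U : Submodule K (ℤ →₀ K)}
    (hU : AlmostLE (U.map (bernoulliShift K).symm.toLinearMap) U) :
    (∃ a : ℤ, U ≤ supported K K (Ici a)) ∨ AlmostLE (supported K K (Iic 0)) U := by
  have hρU : AlmostLE
      ((U.map (indexReflection K).toLinearMap).map (bernoulliShift K).toLinearMap)
      (U.map (indexReflection K).toLinearMap) := by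
    simpa only [← Submodule.map_comp, indexReflection_comp_bernoulliShift_symm] using
      hU.map (indexReflection K).toLinearMap
  rcases exists_le_supported_Iic_or_almostLE_supported_Ici hρU with ⟨b, hb⟩ | hV
  · refine Or.inl ⟨-b, ?_⟩
    rw [← map_indexReflection_map_indexReflection U, ← neg_Iic,
      ← map_indexReflection_supported]
    exact Submodule.map_mono hb
  · right
    simpa [map_indexReflection_map_indexReflection, map_indexReflection_supported] using
      hV.map (indexReflection K).toLinearMap

end Reflection

/-- If a subspace `U` of `V = ⊕_{n∈ℤ} K` is linearly `β`-inert and linearly `β⁻¹`-inert for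
the two-sided Bernoulli shift `β`, then `U` is almost equal to one of `0`, `V⁻ = ⊕_{n≤0} K`,
`V⁺ = ⊕_{n≥0} K`, or `V`. -/
theorem bernoulli_inert_subspaces (K : Type*) [Field K] (U : Submodule K (ℤ →₀ K))
    (h₁ : LinearlyInert (bernoulliShift K).toLinearMap U)
    (h₂ : LinearlyInert (bernoulliShift K).symm.toLinearMap U) :
    AlmostEqual U ⊥ ∨
      AlmostEqual U (Finsupp.supported K K {n : ℤ | n ≤ 0}) ∨
      AlmostEqual U (Finsupp.supported K K {n : ℤ | 0 ≤ n}) ∨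
      AlmostEqual U ⊤ := by
  rw [show {n : ℤ | n ≤ 0} = Iic 0 from rfl, show {n : ℤ | 0 ≤ n} = Ici 0 from rfl]
  simp only [almostEqual_iff]
  rcases exists_le_supported_Iic_or_almostLE_supported_Ici h₁.almostLE_map with
    ⟨b, hb⟩ | hPos <;>
  rcases exists_le_supported_Ici_or_almostLE_supported_Iic h₂.almostLE_map with
    ⟨a, ha⟩ | hNeg
  · have : FiniteDimensional K U := Submodule.finiteDimensional_of_le
      (le_inf hb ha |>.trans_eq (by rw [← supported_inter, Iic_inter_Ici]))
    exact Or.inl ⟨.of_finiteDimensional ⊥, .of_le bot_le⟩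
  · refine Or.inr (Or.inl ⟨(AlmostLE.of_le hb).trans
      (almostLE_supported_of_subset_union (a := 0) (b := b) ?_), hNeg⟩)
    intro k hk
    simp only [mem_union, mem_Iic, mem_Icc] at hk ⊢
    omega
  · refine Or.inr (Or.inr (Or.inl ⟨(AlmostLE.of_le ha).trans
      (almostLE_supported_of_subset_union (a := a) (b := 0) ?_), hPos⟩))
    intro k hk
    simp only [mem_union, mem_Ici, mem_Icc] at hk ⊢
    omega
  · refine Or.inr (Or.inr (Or.inr ⟨.of_le le_top, ?_⟩))
    rw [← supported_univ, ← Iic_union_Ici (a := (0 : ℤ)), supported_union]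
    exact hNeg.sup_left hPos
end

section
/- Let K be a field and A a K-subspace of B = K[x, x⁻¹] with Ax, Ax⁻¹ ⊆ A + F for some finite-dimensional F. Let n₊ (resp. n₋) be the max (resp. min) exponent appearing in supports of nonzero elements of F. If every element of A has lower degree > n₋ and some element has upper degree ≥ n₊, then A is almost equal to K[x] (i.e., A/(A ∩ K[x]) and K[x]/(A ∩ K[x]) are finite-dimensional). -/
/-
If `a ∈ A` has degree `e ≥ n₊`, then `a x ∈ A + F` and `F` lives in degrees `≤ n₊`, so the
`A`-component of `a x` has degree `e + 1`. Starting from the element of degree `≥ n₊` that `A`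
is assumed to contain, `A` therefore has elements of every large degree. Elements of
`A` have no exponents `≤ n₋`, so only the finitely many exponents in the window `(n₋, 0)` separate
`A` from `K[x]`: this gives the finiteness of `A / (A ∩ K[x])`. The images of the elements of `A`
of degree `≤ e` modulo the Laurent polynomials with no exponent in that window form an increasing
chain in a finite-dimensional space, so they stabilise. For large `e`, an element of `A` of
degree `e` can therefore be corrected by one of lower degree to an element of `A ∩ K[x]` of
degree `e`, and such elements span `K[x]` up to finitely many monomials.
-/

open LaurentPolynomial

open AddMonoidAlgebra Set

namespace AddMonoidAlgebra

variable {R M : Type*} [Semiring R]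

theorem supported_union (s t : Set M) :
    supported R R (s ∪ t) = supported R R s ⊔ supported R R t := by
  simp only [supported_eq_span_single, image_union, Submodule.span_union]

theorem supported_inter (s t : Set M) :
    supported R R (s ∩ t) = supported R R s ⊓ supported R R t := by
  simp only [supported, Finsupp.supported_inter, Submodule.comap_inf]

instance finiteDimensional_supported {K : Type*} [Field K] (s : Set M) [Finite s] :
    FiniteDimensional K (supported K K s) :=
  Module.Finite.equiv (supportedEquivFinsupp s).symm

end AddMonoidAlgebra

namespace Submodule

variable {K V : Type*} [Field K] [AddCommGroup V] [Module K V]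

theorem finiteDimensional_map_mkQ_of_le_sup {U N P : Submodule K V} [FiniteDimensional K N]
    (h : U ≤ N ⊔ P) : FiniteDimensional K (U.map P.mkQ) := by
  refine finiteDimensional_of_le (?_ : U.map P.mkQ ≤ N.map P.mkQ)
  calc U.map P.mkQ ≤ (N ⊔ P).map P.mkQ := map_mono h
    _ = N.map P.mkQ := by rw [map_sup, mkQ_map_self, sup_bot_eq]

theorem finiteDimensional_quotient_comap_inf_of_le_sup {U N P : Submodule K V}
    [FiniteDimensional K N] (h : U ≤ N ⊔ P) :
    FiniteDimensional K (U ⧸ (U ⊓ P).comap U.subtype) := by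
  have := finiteDimensional_map_mkQ_of_le_sup h
  have hker : LinearMap.ker (P.mkQ ∘ₗ U.subtype) = (U ⊓ P).comap U.subtype := by
    rw [LinearMap.ker_comp, ker_mkQ, comap_inf, comap_subtype_self, top_inf_eq]
  have hrange : LinearMap.range (P.mkQ ∘ₗ U.subtype) = U.map P.mkQ := by
    rw [LinearMap.range_comp, range_subtype]
  exact Module.Finite.equiv ((quotEquivOfEq _ _ hker).symm ≪≫ₗ
    (P.mkQ ∘ₗ U.subtype).quotKerEquivRange ≪≫ₗ LinearEquiv.ofEq _ _ hrange).symm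

theorem finiteDimensional_quotient_of_top_le_sup {N P : Submodule K V} [FiniteDimensional K N]
    (h : ⊤ ≤ N ⊔ P) : FiniteDimensional K (V ⧸ P) := by
  have := finiteDimensional_map_mkQ_of_le_sup h
  rw [map_top, range_mkQ] at this
  exact Module.Finite.equiv topEquiv

theorem exists_forall_le_sup_of_isNoetherian_quotient {R M : Type*} [Ring R] [AddCommGroup M]
    [Module R M] (P : Submodule R M) [IsNoetherian R (M ⧸ P)] (B : ℕ →o Submodule R M) :
    ∃ n₀, ∀ n ≥ n₀, B (n + 1) ≤ B n ⊔ P := by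
  obtain ⟨n₀, hn₀⟩ := monotone_stabilizes_iff_noetherian.mpr ‹_›
    ⟨fun n => (B n).map P.mkQ, fun _ _ h => map_mono (B.monotone h)⟩
  refine ⟨n₀, fun n hn => ?_⟩
  have hstable : (B (n + 1)).map P.mkQ = (B n).map P.mkQ :=
    (hn₀ _ (by omega)).symm.trans (hn₀ n hn)
  calc B (n + 1) ≤ ((B (n + 1)).map P.mkQ).comap P.mkQ := le_comap_map _ _
    _ = B n ⊔ P := by rw [hstable, comap_map_eq, ker_mkQ]

end Submodule

namespace LaurentPolynomial

section Semiring

variable {R : Type*} [Semiring R]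

theorem coeff_mul_T (f : R[T;T⁻¹]) (n m : ℤ) : (f * T n).coeff m = f.coeff (m - n) := by
  rw [T, coeff_mul_single_apply, mul_one, sub_eq_add_neg]

theorem mem_supported_Iic_iff_degree_le {f : R[T;T⁻¹]} {e : ℤ} :
    f ∈ supported R R (Iic e) ↔ f.degree ≤ e := by
  simp [mem_supported, degree, Finset.max_le_iff, subset_def]

theorem mem_supported_Ioi_iff {f : R[T;T⁻¹]} {e : ℤ} :
    f ∈ supported R R (Ioi e) ↔ (e : WithTop ℤ) < f.coeff.support.min := by
  rw [mem_supported, subset_def]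
  refine ⟨fun h => ?_, fun h j hj => WithTop.coe_lt_coe.mp (h.trans_le (Finset.min_le hj))⟩
  rcases f.coeff.support.eq_empty_or_nonempty with hs | hs
  · simp [hs]
  · rw [← Finset.coe_min' hs]
    exact WithTop.coe_lt_coe.mpr (h _ (f.coeff.support.min'_mem hs))

theorem degree_eq_iff {f : R[T;T⁻¹]} {e : ℤ} :
    f.degree = e ↔ f ∈ supported R R (Iic e) ∧ f.coeff e ≠ 0 := by
  rw [mem_supported_Iic_iff_degree_le]
  refine ⟨fun h => ⟨h.le, Finsupp.mem_support_iff.mp (Finset.mem_of_max h)⟩, fun ⟨hle, he⟩ => ?_⟩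
  exact le_antisymm hle (Finset.le_max (Finsupp.mem_support_iff.mpr he))

theorem span_range_T_natCast :
    Submodule.span R (range fun n : ℕ => (T n : R[T;T⁻¹])) = supported R R (Ici 0) := by
  rw [supported_eq_span_single, ← Nat.range_cast_int, ← range_comp]
  rfl

end Semiring

variable {K : Type*} [Field K]

theorem exists_degree_eq_add_one {A F : Submodule K K[T;T⁻¹]} {n e : ℤ}
    (hAx : A.map (LinearMap.mulRight K (T 1)) ≤ A ⊔ F) (hF : F ≤ supported K K (Iic n))
    (hne : n ≤ e) {a : K[T;T⁻¹]} (ha : a ∈ A) (hae : a.degree = e) :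
    ∃ b ∈ A, b.degree = ↑(e + 1) := by
  obtain ⟨b, hb, f, hf, hbf⟩ := Submodule.mem_sup.mp (hAx ⟨a, ha, rfl⟩)
  have hcoeff (j : ℤ) : b.coeff j = a.coeff (j - 1) - f.coeff j := by
    rw [← coeff_mul_T, ← LinearMap.mulRight_apply (R := K), ← hbf, coeff_add]
    exact (add_sub_cancel_right _ _).symm
  rw [degree_eq_iff, mem_supported'] at hae
  have hfj := mem_supported'.mp (hF hf)
  refine ⟨b, hb, degree_eq_iff.mpr ⟨mem_supported'.mpr fun j hj => ?_, ?_⟩⟩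
  · simp only [mem_Iic, not_le] at hj
    rw [hcoeff, hae.1 _ (by rw [mem_Iic]; omega), hfj _ (by rw [mem_Iic]; omega), sub_zero]
  · rw [hcoeff, add_sub_cancel_right, hfj _ (by rw [mem_Iic]; omega), sub_zero]
    exact hae.2

theorem exists_degree_eq_of_le {A F : Submodule K K[T;T⁻¹]} {n d : ℤ}
    (hAx : A.map (LinearMap.mulRight K (T 1)) ≤ A ⊔ F) (hF : F ≤ supported K K (Iic n))
    (hnd : n ≤ d) {a : K[T;T⁻¹]} (ha : a ∈ A) (had : a.degree = d) :
    ∀ e, d ≤ e → ∃ b ∈ A, b.degree = e := by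
  intro e hde
  induction e, hde using Int.leInduction with
  | base => exact ⟨a, ha, had⟩
  | succ e hde ih =>
    obtain ⟨b, hb, hbe⟩ := ih
    exact exists_degree_eq_add_one hAx hF (hnd.trans hde) hb hbe

theorem exists_forall_exists_mem_inf_supported_Ici_degree_eq {A : Submodule K K[T;T⁻¹]}
    {m d : ℤ} (hA : A ≤ supported K K (Ioi m)) (htop : ∀ e, d ≤ e → ∃ a ∈ A, a.degree = e) :
    ∃ E : ℤ, ∀ e : ℤ, E ≤ e → ∃ c ∈ A ⊓ supported K K (Ici 0), c.degree = e := by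
  set P := supported K K (Iic m ∪ Ici 0)
  have : FiniteDimensional K (K[T;T⁻¹] ⧸ P) := by
    refine Submodule.finiteDimensional_quotient_of_top_le_sup (N := supported K K (Ioo m 0)) ?_
    rw [← supported_union]
    refine fun f _ => mem_supported'.mpr fun j hj => ?_
    simp only [mem_union, mem_Ioo, mem_Iic, mem_Ici] at hj
    omega
  let B : ℕ →o Submodule K K[T;T⁻¹] :=
    ⟨fun n => A ⊓ supported K K (Iic n), fun i j h => inf_le_inf_left _ (supported_mono
      (Iic_subset_Iic.mpr (by exact_mod_cast h)))⟩
  obtain ⟨n₀, hn₀⟩ := P.exists_forall_le_sup_of_isNoetherian_quotient B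
  refine ⟨max d (n₀ + 1), fun e he => ?_⟩
  obtain ⟨n, rfl⟩ : ∃ n : ℕ, e = n + 1 := ⟨(e - 1).toNat, by omega⟩
  obtain ⟨a, ha, hae⟩ := htop _ (le_of_max_le_left he)
  rw [degree_eq_iff] at hae
  obtain ⟨a', ⟨ha'A, ha'n⟩, p, hp, rfl⟩ :=
    Submodule.mem_sup.mp (hn₀ n (by omega) ⟨ha, by exact_mod_cast hae.1⟩)
  have hpA : p ∈ A := by simpa using A.sub_mem ha ha'A
  have ha'top : a'.coeff (n + 1) = 0 := mem_supported'.mp ha'n _ (by simp)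
  refine ⟨p, ⟨hpA, ?_⟩, degree_eq_iff.mpr ⟨?_, ?_⟩⟩
  · refine supported_mono (fun j hj => ?_) ((supported_inter _ _).ge ⟨hA hpA, hp⟩)
    simp only [mem_inter_iff, mem_Ioi, mem_union, mem_Iic, mem_Ici] at hj ⊢
    omega
  · simpa using Submodule.sub_mem _ hae.1 (supported_mono (Iic_subset_Iic.mpr (by omega)) ha'n)
  · simpa [coeff_add, ha'top] using hae.2

theorem supported_inter_Iic_le_sup_span_singleton {s : Set ℤ} {e : ℤ} {c : K[T;T⁻¹]}
    (hc : c ∈ supported K K s) (hce : c.degree = e) :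
    supported K K (s ∩ Iic e) ≤ supported K K (s ∩ Iio e) ⊔ K ∙ c := by
  intro f hf
  rw [degree_eq_iff] at hce
  have hlower : f - (f.coeff e / c.coeff e) • c ∈ supported K K (s ∩ Iio e) := by
    refine mem_supported'.mpr fun j hj => ?_
    rw [coeff_sub, coeff_smul, Finsupp.sub_apply, Finsupp.smul_apply, smul_eq_mul]
    rcases eq_or_ne j e with rfl | hje
    · rw [div_mul_cancel₀ _ hce.2, sub_self]
    · have hjs : j ∉ s ∩ Iic e := fun h => hj ⟨h.1, lt_of_le_of_ne h.2 hje⟩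
      rw [mem_supported'.mp hf j hjs,
        mem_supported'.mp ((supported_inter _ _).ge ⟨hc, hce.1⟩) j hjs, mul_zero, sub_zero]
  exact Submodule.mem_sup.mpr ⟨_, hlower, _,
    Submodule.smul_mem _ _ (Submodule.mem_span_singleton_self c), sub_add_cancel _ _⟩

theorem supported_le_sup_of_forall_exists_degree_eq {s : Set ℤ} {C : Submodule K K[T;T⁻¹]}
    {E : ℤ} (hC : ∀ e ∈ s, E ≤ e → ∃ c ∈ C ⊓ supported K K s, c.degree = e) :
    supported K K s ≤ supported K K (s ∩ Iio E) ⊔ C := by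
  have hle (e : ℤ) (he : E ≤ e) : supported K K (s ∩ Iio e) ≤ supported K K (s ∩ Iio E) ⊔ C := by
    induction e, he using Int.leInduction with
    | base => exact le_sup_left
    | succ e he ih =>
      rw [show s ∩ Iio (e + 1) = s ∩ Iic e by ext; simp]
      by_cases hes : e ∈ s
      · obtain ⟨c, ⟨hcC, hcs⟩, hce⟩ := hC e hes he
        exact (supported_inter_Iic_le_sup_span_singleton hcs hce).trans
          (sup_le ih (le_sup_of_le_right ((Submodule.span_singleton_le_iff_mem _ _).mpr hcC)))
      · refine le_trans (supported_mono ?_) ih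
        exact fun j hj => ⟨hj.1, lt_of_le_of_ne hj.2 (ne_of_mem_of_not_mem hj.1 hes)⟩
  intro f hf
  obtain ⟨b, hb⟩ := f.coeff.support.bddAbove
  refine hle (max E (b + 1)) (le_max_left _ _) (mem_supported.mpr fun j hj => ⟨hf hj, ?_⟩)
  have := hb hj
  simp only [mem_Iio]
  omega

end LaurentPolynomial

theorem almost_equal_polynomials_of_bounded_below_general (K : Type*) [Field K]
    (A F : Submodule K K[T;T⁻¹])
    (hAx : A.map (LinearMap.mulRight K (T 1)) ≤ A ⊔ F)
    (nplus nminus : ℤ)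
    (hmax : ∀ f ∈ F, f ≠ 0 → f.coeff.support.max ≤ (nplus : WithBot ℤ))
    (hlow : ∀ a ∈ A, a ≠ 0 → (nminus : WithTop ℤ) < a.coeff.support.min)
    (hup : ∃ a ∈ A, (nplus : WithBot ℤ) ≤ a.coeff.support.max) :
    AlmostEqual A (Submodule.span K (Set.range fun n : ℕ => (T (n : ℤ) : K[T;T⁻¹]))) := by
  have hF : F ≤ supported K K (Iic nplus) := fun f hf => by
    rcases eq_or_ne f 0 with rfl | hf0
    · exact zero_mem _
    · exact mem_supported_Iic_iff_degree_le.mpr (hmax f hf hf0)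
  have hA : A ≤ supported K K (Ioi nminus) := fun a ha => by
    rcases eq_or_ne a 0 with rfl | ha0
    · exact zero_mem _
    · exact mem_supported_Ioi_iff.mpr (hlow a ha ha0)
  obtain ⟨a, ha, hna⟩ := hup
  obtain ⟨d, hd⟩ := WithBot.ne_bot_iff_exists.mp (ne_bot_of_le_ne_bot WithBot.coe_ne_bot hna)
  obtain ⟨E, hE⟩ := exists_forall_exists_mem_inf_supported_Ici_degree_eq hA
    (exists_degree_eq_of_le hAx hF (WithBot.coe_le_coe.mp (hd ▸ hna)) ha hd.symm)
  rw [span_range_T_natCast]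
  constructor
  · refine Submodule.finiteDimensional_quotient_comap_inf_of_le_sup
      (N := supported K K (Ioo nminus 0)) (hA.trans ?_)
    rw [← supported_union]
    refine supported_mono fun j (hj : nminus < j) => ?_
    simp only [mem_union, mem_Ioo, mem_Ici]
    omega
  · rw [inf_comm]
    refine Submodule.finiteDimensional_quotient_comap_inf_of_le_sup
      (N := supported K K (Ico 0 E)) ?_
    rw [← Ici_inter_Iio]
    exact supported_le_sup_of_forall_exists_degree_eq fun e _ he => hE e he

/-- Let `A ≤ B = K[x,x⁻¹]` with `Ax, Ax⁻¹ ⊆ A + F` for a finite-dimensional `F`, and let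
`n₊` (resp. `n₋`) be the maximal (resp. minimal) exponent appearing in supports of nonzero
elements of `F`.  If every nonzero element of `A` has lower degree `> n₋` while some element
of `A` has upper degree `≥ n₊`, then `A` is almost equal to `K[x]`. -/
theorem almost_equal_polynomials_of_bounded_below (K : Type*) [Field K]
    (A F : Submodule K K[T;T⁻¹]) (hF : FiniteDimensional K F)
    (hAx : A.map (LinearMap.mulRight K (T 1)) ≤ A ⊔ F)
    (hAxinv : A.map (LinearMap.mulRight K (T (-1))) ≤ A ⊔ F)
    (nplus nminus : ℤ)
    (hmax : ∀ f ∈ F, f ≠ 0 → f.coeff.support.max ≤ (nplus : WithBot ℤ))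
    (hmax_att : ∃ f ∈ F, f ≠ 0 ∧ f.coeff.support.max = (nplus : WithBot ℤ))
    (hmin : ∀ f ∈ F, f ≠ 0 → (nminus : WithTop ℤ) ≤ f.coeff.support.min)
    (hmin_att : ∃ f ∈ F, f ≠ 0 ∧ f.coeff.support.min = (nminus : WithTop ℤ))
    (hlow : ∀ a ∈ A, a ≠ 0 → (nminus : WithTop ℤ) < a.coeff.support.min)
    (hup : ∃ a ∈ A, (nplus : WithBot ℤ) ≤ a.coeff.support.max) :
    AlmostEqual A (Submodule.span K (Set.range fun n : ℕ => (T (n : ℤ) : K[T;T⁻¹]))) :=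
  almost_equal_polynomials_of_bounded_below_general K A F hAx nplus nminus hmax hlow hup
end
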